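/- Let G be a strongly connected digraph with n ≥ 4 vertices and m arcs, and let q(G) be the spectral radius of the signless Laplacian Q(G) = D(G) + A(G). Then q(G) ≤ max{Δ⁺(G), (m−n+1)/2} + 2. -/

import Mathlib

open Matrix Finset ENNReal

/-- The outdegree of a vertex in a digraph given by its arc relation. -/
def outDeg {V : Type*} [Fintype V] (E : V → V → Prop) [DecidableRel E] (u : V) : ℕ :=
  (Finset.univ.filter (fun v => E u v)).card

/-- The maximum outdegree. -/
def maxOutDeg {V : Type*} [Fintype V] (E : V → V → Prop) [DecidableRel E] : ℕ :=
  Finset.univ.sup (outDeg E)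

/-- A simple digraph has no loops. -/
def IsSimpleDigraph {V : Type*} (E : V → V → Prop) : Prop := ∀ v, ¬ E v v

/-- Strong connectivity: every vertex reaches every other by a directed walk. -/
def StronglyConnected {V : Type*} (E : V → V → Prop) : Prop :=
  ∀ u v, Relation.ReflTransGen E u v

/-- The A_α matrix  α D + (1-α) A  of a digraph, over ℂ. -/
noncomputable def Aalpha {V : Type*} [Fintype V] [DecidableEq V] (α : ℝ)
    (E : V → V → Prop) [DecidableRel E] : Matrix V V ℂ :=
  (α : ℂ) • Matrix.diagonal (fun u => (outDeg E u : ℂ)) +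
    ((1 - α : ℝ) : ℂ) • Matrix.of (fun u v => if E u v then (1 : ℂ) else 0)

/-- The A_α spectral radius of a digraph. -/
noncomputable def lambdaAlpha {V : Type*} [Fintype V] [DecidableEq V] (α : ℝ)
    (E : V → V → Prop) [DecidableRel E] : ℝ≥0∞ :=
  spectralRadius ℂ (Aalpha α E)

/-- The signless Laplacian matrix D + A of a digraph, over ℂ. -/
noncomputable def signlessLaplacian {V : Type*} [Fintype V] [DecidableEq V]
    (E : V → V → Prop) [DecidableRel E] : Matrix V V ℂ :=
  Matrix.diagonal (fun u => (outDeg E u : ℂ)) +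
    Matrix.of (fun u v => if E u v then (1 : ℂ) else 0)

/-- The signless Laplacian spectral radius of a digraph. -/
noncomputable def qSpec {V : Type*} [Fintype V] [DecidableEq V]
    (E : V → V → Prop) [DecidableRel E] : ℝ≥0∞ :=
  spectralRadius ℂ (signlessLaplacian E)

/-!
Weight each vertex by its outdegree `d`. For an eigenvector `x` of `Q(G)`, a vertex `u`
maximising `|x_u| / d_u` gives `|μ| ≤ (d_u² + ∑_{u → v} d_v) / d_u`. The neighbour sum is at
most `d_u Δ⁺` and, since every other vertex has outdegree at least `1`, at most `m - n + 1`;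
an elementary case split on `d_u ≤ 2` turns these two bounds into the claimed one.
-/

section WeightedRowSum

variable {𝕜 : Type*} [NormedField 𝕜] {ι : Type*} [Fintype ι]

theorem norm_le_of_mulVec_eq_smul_of_weighted_row_sum_le {A : Matrix ι ι 𝕜} {x : ι → 𝕜}
    {μ : 𝕜} (hx : x ≠ 0) (hμ : A *ᵥ x = μ • x) {w : ι → ℝ} (hw : ∀ i, 0 < w i) {B : ℝ}
    (hB : ∀ i, ∑ j, ‖A i j‖ * w j ≤ B * w i) : ‖μ‖ ≤ B := by
  obtain ⟨k, hk⟩ := Function.ne_iff.mp hx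
  obtain ⟨i, -, hi⟩ := exists_max_image univ (fun j => ‖x j‖ / w j) ⟨k, mem_univ k⟩
  set β := ‖x i‖ / w i
  have hxβ : ∀ j, ‖x j‖ ≤ β * w j := fun j =>
    (div_le_iff₀ (hw j)).mp (hi j (mem_univ j))
  have hxi : ‖x i‖ = β * w i := (div_mul_cancel₀ _ (hw i).ne').symm
  have hβ : 0 < β := (div_pos (norm_pos_iff.mpr hk) (hw k)).trans_le (hi k (mem_univ k))
  have hxi_pos : 0 < ‖x i‖ := hxi ▸ mul_pos hβ (hw i)
  have key : ‖μ‖ * ‖x i‖ ≤ B * ‖x i‖ :=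
    calc ‖μ‖ * ‖x i‖ = ‖∑ j, A i j * x j‖ := by
          rw [← norm_mul, ← smul_eq_mul, ← Pi.smul_apply, ← hμ]; rfl
      _ ≤ ∑ j, ‖A i j‖ * ‖x j‖ := by
          simpa only [norm_mul] using norm_sum_le univ fun j => A i j * x j
      _ ≤ ∑ j, ‖A i j‖ * (β * w j) := by gcongr with j; exact hxβ j
      _ = β * ∑ j, ‖A i j‖ * w j := by rw [mul_sum]; exact sum_congr rfl fun j _ => by ring
      _ ≤ β * (B * w i) := by gcongr; exact hB i
      _ = B * ‖x i‖ := by rw [hxi]; ring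
  exact le_of_mul_le_mul_right key hxi_pos

theorem spectralRadius_le_of_weighted_row_sum_le [DecidableEq ι] (A : Matrix ι ι 𝕜)
    {w : ι → ℝ} (hw : ∀ i, 0 < w i) {B : ℝ} (hB : ∀ i, ∑ j, ‖A i j‖ * w j ≤ B * w i) :
    spectralRadius 𝕜 A ≤ ENNReal.ofReal B := by
  refine iSup₂_le fun μ hμ => ?_
  rw [← spectrum_toLin', ← Module.End.hasEigenvalue_iff_mem_spectrum] at hμ
  obtain ⟨x, hx⟩ := hμ.exists_hasEigenvector
  have hμB := norm_le_of_mulVec_eq_smul_of_weighted_row_sum_le hx.2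
    (by simpa using hx.apply_eq_smul) hw hB
  exact (ofReal_norm μ).symm.trans_le (ofReal_le_ofReal hμB)

end WeightedRowSum

theorem sq_add_le_max_add_two_mul {d D C S : ℝ} (hd : 1 ≤ d) (hdD : d ≤ D) (hSC : S ≤ C)
    (hSdD : S ≤ d * D) : d ^ 2 + S ≤ (max D (C / 2) + 2) * d := by
  have hd0 : 0 ≤ d := by linarith
  have hDd := mul_le_mul_of_nonneg_right (le_max_left D (C / 2)) hd0
  have hCd := mul_le_mul_of_nonneg_right (le_max_right D (C / 2)) hd0
  rcases le_or_gt d 2 with hd2 | hd2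
  · nlinarith
  rcases le_or_gt C (2 * d) with hC2 | hC2
  · nlinarith
  -- `(C/2 + 2) d - d² - C = (d - 2)(C - 2d) / 2`
  · nlinarith [mul_pos (sub_pos.mpr hd2) (sub_pos.mpr hC2)]

section Digraph

variable {V : Type*} [Fintype V] {E : V → V → Prop} [DecidableRel E]

theorem outDeg_pos [Nontrivial V] (hsc : StronglyConnected E) (u : V) : 0 < outDeg E u := by
  obtain ⟨w, hw⟩ := exists_ne u
  rcases (hsc u w).cases_head with rfl | ⟨v, huv, -⟩
  · exact absurd rfl hw
  · exact card_pos.mpr ⟨v, mem_filter.mpr ⟨mem_univ v, huv⟩⟩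

theorem outDeg_le_maxOutDeg (u : V) : outDeg E u ≤ maxOutDeg E :=
  le_sup (mem_univ u)

theorem sum_outDeg_out_le_outDeg_mul_maxOutDeg (u : V) :
    ∑ v with E u v, outDeg E v ≤ outDeg E u * maxOutDeg E :=
  (sum_le_card_nsmul _ _ _ fun v _ => outDeg_le_maxOutDeg v).trans_eq (smul_eq_mul _ _)

/-- `∑_{u → v} d_v ≤ m - n + 1`, with the subtraction moved across. -/
theorem sum_outDeg_out_add_card_le (hsimple : IsSimpleDigraph E)
    (hpos : ∀ v, 0 < outDeg E v) (u : V) :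
    ∑ v with E u v, outDeg E v + Fintype.card V ≤ ∑ v, outDeg E v + 1 := by
  classical
  set T := univ.filter fun v => ¬ E u v
  have huT : u ∈ T := mem_filter.mpr ⟨mem_univ u, hsimple u⟩
  have hcard : outDeg E u + #T = Fintype.card V := card_filter_add_card_filter_not _
  have hT : outDeg E u + #(T.erase u) ≤ ∑ v ∈ T, outDeg E v := by
    rw [← add_sum_erase T _ huT, card_eq_sum_ones]
    gcongr with v
    exact hpos v
  have hsplit : ∑ v with E u v, outDeg E v + ∑ v ∈ T, outDeg E v = ∑ v, outDeg E v :=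
    sum_filter_add_sum_filter_not _ _ _
  have := card_erase_add_one huT
  omega

theorem outDeg_sq_add_sum_outDeg_out_le (hsimple : IsSimpleDigraph E)
    (hpos : ∀ v, 0 < outDeg E v) (u : V) :
    (outDeg E u : ℝ) ^ 2 + ∑ v with E u v, (outDeg E v : ℝ) ≤
      (max (maxOutDeg E : ℝ) (((∑ v, outDeg E v : ℕ) - Fintype.card V + 1) / 2) + 2) *
        outDeg E u := by
  have hm : ((∑ v with E u v, outDeg E v : ℕ) : ℝ) + Fintype.card V ≤
      (∑ v, outDeg E v : ℕ) + 1 := by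
    exact_mod_cast sum_outDeg_out_add_card_le hsimple hpos u
  have hΔ : ((∑ v with E u v, outDeg E v : ℕ) : ℝ) ≤ outDeg E u * maxOutDeg E := by
    exact_mod_cast sum_outDeg_out_le_outDeg_mul_maxOutDeg u
  push_cast at hm hΔ ⊢
  exact sq_add_le_max_add_two_mul (by exact_mod_cast hpos u)
    (by exact_mod_cast outDeg_le_maxOutDeg u) (by linarith) hΔ

variable [DecidableEq V]

theorem norm_signlessLaplacian_apply (u v : V) :
    ‖signlessLaplacian E u v‖ =
      (if u = v then (outDeg E u : ℝ) else 0) + if E u v then 1 else 0 := by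
  have : signlessLaplacian E u v =
      (((if u = v then (outDeg E u : ℝ) else 0) + if E u v then 1 else 0 : ℝ) : ℂ) := by
    simp only [signlessLaplacian, Matrix.add_apply, diagonal_apply, of_apply]
    split_ifs <;> simp_all
  rw [this, Complex.norm_real, Real.norm_of_nonneg (by positivity)]

theorem sum_norm_signlessLaplacian_mul (w : V → ℝ) (u : V) :
    ∑ v, ‖signlessLaplacian E u v‖ * w v = outDeg E u * w u + ∑ v with E u v, w v := by
  simp only [norm_signlessLaplacian_apply, add_mul, sum_add_distrib, ite_mul, zero_mul,
    one_mul, sum_ite_eq, mem_univ, if_true, sum_filter]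

end Digraph

theorem stmt_5 {V : Type*} [Fintype V] [DecidableEq V]
    (E : V → V → Prop) [DecidableRel E]
    (hsimple : IsSimpleDigraph E) (hsc : StronglyConnected E)
    (n m : ℕ) (hn : n = Fintype.card V) (hn4 : 4 ≤ n)
    (hm : m = ∑ v, outDeg E v) :
    qSpec E ≤ ENNReal.ofReal
      (max (maxOutDeg E : ℝ) (((m : ℝ) - n + 1) / 2) + 2) := by
  have : Nontrivial V := Fintype.one_lt_card_iff_nontrivial.mp (by omega)
  have hpos := outDeg_pos hsc
  refine spectralRadius_le_of_weighted_row_sum_le _ (w := fun v => outDeg E v)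
    (fun v => by exact_mod_cast hpos v) fun u => ?_
  rw [sum_norm_signlessLaplacian_mul, hm, hn, ← sq]
  exact outDeg_sq_add_sum_outDeg_out_le hsimple hpos u
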